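/- Let μ be a positive Borel measure on ℝ that is tempered, i.e. there exists l > 0 with ∫_ℝ (1+|x|)^{-l} dμ(x) < ∞, and suppose there is ε > 0 with μ((-ε,ε)) = 0. Then for every real s ≤ 0, the iterated integral ∫₁^∞ t^{(s-1)/2} (∫_ℝ |x|·e^{-t·x²} dμ(x)) dt is finite. -/

import Mathlib

/-!
Off the gap `(-ε, ε)` one has `e^{-t x²} ≤ e^{-ε² (t - 1)} e^{-x²}` for `t ≥ 1`, and `|x| e^{-x²}`
is bounded by a constant multiple of the tempering weight `(1 + |x|)^{-l}`. Hence the inner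
integral decays like `e^{-ε² t}`, while `t^{(s-1)/2} ≤ 1` on `(1, ∞)`.
-/

open MeasureTheory Real

lemma exp_neg_mul_sq_le_of_le_abs {ε t x : ℝ} (hε : 0 ≤ ε) (hεx : ε ≤ |x|) (ht : 1 ≤ t) :
    exp (-t * x ^ 2) ≤ exp (-(ε ^ 2) * (t - 1)) * exp (-x ^ 2) := by
  have hsq : ε ^ 2 ≤ x ^ 2 := by
    rw [← sq_abs x]
    exact pow_le_pow_left₀ hε hεx 2
  rw [← exp_add, exp_le_exp]
  nlinarith [mul_le_mul_of_nonneg_left hsq (sub_nonneg.mpr ht)]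

/-- `(1 + |x|)^a ≤ exp (a |x|)` and `a |x| - x² ≤ a² / 4`. -/
lemma one_add_abs_rpow_mul_exp_neg_sq_le {a : ℝ} (ha : 0 ≤ a) (x : ℝ) :
    (1 + |x|) ^ a * exp (-x ^ 2) ≤ exp (a ^ 2 / 4) := by
  have hpos : 0 < 1 + |x| := by positivity
  have hlog : log (1 + |x|) ≤ |x| := by linarith [log_le_sub_one_of_pos hpos]
  rw [rpow_def_of_pos hpos, ← exp_add, exp_le_exp]
  nlinarith [sq_nonneg (|x| - a / 2), sq_abs x, mul_le_mul_of_nonneg_left hlog ha]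

lemma abs_mul_exp_neg_sq_le_rpow {l : ℝ} (hl : -1 ≤ l) (x : ℝ) :
    |x| * exp (-x ^ 2) ≤ exp ((l + 1) ^ 2 / 4) * (1 + |x|) ^ (-l) := by
  have hpos : 0 < 1 + |x| := by positivity
  have hbound := one_add_abs_rpow_mul_exp_neg_sq_le (a := l + 1) (by linarith) x
  rw [rpow_add hpos, rpow_one] at hbound
  calc |x| * exp (-x ^ 2)
      ≤ (1 + |x|) * exp (-x ^ 2) := by gcongr; linarith
    _ = (1 + |x|) ^ l * (1 + |x|) * exp (-x ^ 2) * (1 + |x|) ^ (-l) := by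
      rw [rpow_neg hpos.le]; field_simp
    _ ≤ exp ((l + 1) ^ 2 / 4) * (1 + |x|) ^ (-l) := by gcongr

lemma lintegral_abs_mul_exp_neg_mul_sq_le {μ : Measure ℝ} {ε l t : ℝ} (hε : 0 ≤ ε)
    (hgap : μ (Set.Ioo (-ε) ε) = 0) (hl : -1 ≤ l) (ht : 1 ≤ t) :
    ∫⁻ x, ENNReal.ofReal (|x| * exp (-t * x ^ 2)) ∂μ ≤
      ENNReal.ofReal (exp ((l + 1) ^ 2 / 4) * exp (-(ε ^ 2) * (t - 1))) *
        ∫⁻ x, ENNReal.ofReal ((1 + |x|) ^ (-l)) ∂μ := by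
  rw [← lintegral_const_mul' _ _ ENNReal.ofReal_ne_top]
  have hae : ∀ᵐ x ∂μ, x ∉ Set.Ioo (-ε) ε := measure_eq_zero_iff_ae_notMem.mp hgap
  refine lintegral_mono_ae (hae.mono fun x hx ↦ ?_)
  have hεx : ε ≤ |x| := by
    by_contra! h
    exact hx (abs_lt.mp h)
  rw [← ENNReal.ofReal_mul (by positivity)]
  refine ENNReal.ofReal_le_ofReal ?_
  calc |x| * exp (-t * x ^ 2)
      ≤ |x| * (exp (-(ε ^ 2) * (t - 1)) * exp (-x ^ 2)) :=
        mul_le_mul_of_nonneg_left (exp_neg_mul_sq_le_of_le_abs hε hεx ht) (abs_nonneg x)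
    _ = exp (-(ε ^ 2) * (t - 1)) * (|x| * exp (-x ^ 2)) := by ring
    _ ≤ exp (-(ε ^ 2) * (t - 1)) * (exp ((l + 1) ^ 2 / 4) * (1 + |x|) ^ (-l)) :=
        mul_le_mul_of_nonneg_left (abs_mul_exp_neg_sq_le_rpow hl x) (exp_pos _).le
    _ = _ := by ring

lemma setLIntegral_Ioi_exp_neg_mul_sub_lt_top {c : ℝ} (hc : 0 < c) (a : ℝ) :
    ∫⁻ t in Set.Ioi a, ENNReal.ofReal (exp (-c * (t - a))) < ⊤ := by
  have hint : IntegrableOn (fun t ↦ exp (c * a) * exp (-c * t)) (Set.Ioi a) :=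
    (exp_neg_integrableOn_Ioi a hc).const_mul _
  refine IntegrableOn.setLIntegral_lt_top (hint.congr_fun (fun t _ ↦ ?_) measurableSet_Ioi)
  dsimp only
  rw [← exp_add]; ring_nf

/-- If `μ` is a tempered positive Borel measure on `ℝ` with a spectral gap
(`μ((-ε,ε)) = 0` for some `ε > 0`), then for every `s ≤ 0` the large-time part
`∫₁^∞ t^{(s-1)/2} (∫ |x| e^{-t x²} dμ(x)) dt` of the eta function is finite. -/
theorem eta_large_time_convergence (μ : Measure ℝ)
    (htemp : ∃ l : ℝ, 0 < l ∧ ∫⁻ x, ENNReal.ofReal ((1 + |x|) ^ (-l)) ∂μ < ⊤)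
    (hgap : ∃ ε : ℝ, 0 < ε ∧ μ (Set.Ioo (-ε) ε) = 0) (s : ℝ) (hs : s ≤ 0) :
    ∫⁻ t in Set.Ioi (1 : ℝ),
        ENNReal.ofReal (t ^ ((s - 1) / 2)) *
          ∫⁻ x, ENNReal.ofReal (|x| * Real.exp (-t * x ^ 2)) ∂μ < ⊤ := by
  obtain ⟨l, hl, hM⟩ := htemp
  obtain ⟨ε, hε, hgap⟩ := hgap
  set K := ENNReal.ofReal (exp ((l + 1) ^ 2 / 4)) * ∫⁻ x, ENNReal.ofReal ((1 + |x|) ^ (-l)) ∂μ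
  have hK : K ≠ ⊤ := ENNReal.mul_ne_top ENNReal.ofReal_ne_top hM.ne
  have hbound : ∀ t ∈ Set.Ioi (1 : ℝ),
      ENNReal.ofReal (t ^ ((s - 1) / 2)) *
          ∫⁻ x, ENNReal.ofReal (|x| * exp (-t * x ^ 2)) ∂μ ≤
        K * ENNReal.ofReal (exp (-(ε ^ 2) * (t - 1))) := fun t ht ↦ by
    have hpow : ENNReal.ofReal (t ^ ((s - 1) / 2)) ≤ 1 :=
      ENNReal.ofReal_le_one.mpr (rpow_le_one_of_one_le_of_nonpos ht.le (by linarith))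
    refine (mul_le_of_le_one_left' hpow).trans <|
      (lintegral_abs_mul_exp_neg_mul_sq_le hε.le hgap (l := l) (by linarith) ht.le).trans_eq ?_
    rw [ENNReal.ofReal_mul (exp_pos _).le, mul_right_comm]
  calc _ ≤ ∫⁻ t in Set.Ioi (1 : ℝ), K * ENNReal.ofReal (exp (-(ε ^ 2) * (t - 1))) :=
        setLIntegral_mono' measurableSet_Ioi hbound
    _ = K * ∫⁻ t in Set.Ioi (1 : ℝ), ENNReal.ofReal (exp (-(ε ^ 2) * (t - 1))) :=
        lintegral_const_mul' _ _ hK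
    _ < ⊤ := ENNReal.mul_lt_top hK.lt_top
        (setLIntegral_Ioi_exp_neg_mul_sub_lt_top (by positivity) 1)
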